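/- Let A1 and A2 be positive conjunctive TABG over the same signature Σ with the same flat theory E, whose global constraints are conjunctions of atoms q ≈ q' and q ≉ q'. Then a positive conjunctive TABG A with the same theory E can be effectively constructed satisfying L(A) = L(A1) ∪ L(A2). -/

import Mathlib

set_option maxHeartbeats 1000000

namespace TreeAut

/-! ### Ranked terms -/

/-- Ranked terms over a symbol type `F` (arities are imposed by well-formedness). -/
inductive RTerm (F : Type) : Type
  | node : F → List (RTerm F) → RTerm F

namespace RTerm

def rootLabel {F : Type} : RTerm F → F
  | .node f _ => f

/-- `SubAt t p s` : the subterm of `t` at position `p` is `s`. -/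
inductive SubAt {F : Type} : RTerm F → List ℕ → RTerm F → Prop
  | refl (t : RTerm F) : SubAt t [] t
  | step {f : F} {ts : List (RTerm F)} {i : ℕ} {u s : RTerm F} {p : List ℕ} :
      ts[i]? = some u → SubAt u p s → SubAt (RTerm.node f ts) (i :: p) s

/-- `p` is a position of `t`. -/
def IsPos {F : Type} (t : RTerm F) (p : List ℕ) : Prop := ∃ s, SubAt t p s

/-- `ReplAt t p s t'` : `t'` is the result of replacing in `t` the subterm at `p` by `s`. -/
inductive ReplAt {F : Type} : RTerm F → List ℕ → RTerm F → RTerm F → Prop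
  | here (t s : RTerm F) : ReplAt t [] s s
  | step {f : F} {ts : List (RTerm F)} {i : ℕ} {u u' s : RTerm F} {p : List ℕ} :
      ts[i]? = some u → ReplAt u p s u' →
      ReplAt (RTerm.node f ts) (i :: p) s (RTerm.node f (ts.set i u'))

/-- Height of a term: the maximal length of a position. -/
def height {F : Type} : RTerm F → ℕ
  | .node _ [] => 0
  | .node f (t :: ts) => max (height t + 1) (height (RTerm.node f ts))

/-- Well-formedness of a term with respect to an arity function. -/
inductive WF {F : Type} (ar : F → ℕ) : RTerm F → Prop
  | node {f : F} {ts : List (RTerm F)} :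
      ts.length = ar f → (∀ u ∈ ts, WF ar u) → WF ar (RTerm.node f ts)

/-- A constant, i.e. a term reduced to a symbol (of arity 0). -/
def IsConst {F : Type} (t : RTerm F) : Prop := ∃ c : F, t = RTerm.node c []

/-- Relabeling of a term. -/
def map {F G : Type} (g : F → G) : RTerm F → RTerm G
  | .node f ts => RTerm.node (g f) (ts.attach.map (fun u => map g u.1))
decreasing_by
  simp only [RTerm.node.sizeOf_spec]
  have := List.sizeOf_lt_of_mem u.2
  omega

end RTerm

/-! ### Patterns (terms with variables) and flat equational theories -/

/-- Terms with variables (variables are natural numbers). -/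
inductive Pat (F : Type) : Type
  | var : ℕ → Pat F
  | node : F → List (Pat F) → Pat F

namespace Pat

def subst {F : Type} (σ : ℕ → RTerm F) : Pat F → RTerm F
  | .var v => σ v
  | .node f ps => RTerm.node f (ps.attach.map (fun p => subst σ p.1))
decreasing_by
  simp only [Pat.node.sizeOf_spec]
  have := List.sizeOf_lt_of_mem p.2
  omega

def height {F : Type} : Pat F → ℕ
  | .var _ => 0
  | .node _ [] => 0
  | .node f (p :: ps) => max (height p + 1) (height (Pat.node f ps))

inductive HasVar {F : Type} (v : ℕ) : Pat F → Prop
  | var : HasVar v (Pat.var v)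
  | node {f : F} {ps : List (Pat F)} {p : Pat F} :
      p ∈ ps → HasVar v p → HasVar v (Pat.node f ps)

inductive WF {F : Type} (ar : F → ℕ) : Pat F → Prop
  | var (v : ℕ) : WF ar (Pat.var v)
  | node {f : F} {ps : List (Pat F)} :
      ps.length = ar f → (∀ p ∈ ps, WF ar p) → WF ar (Pat.node f ps)

end Pat

/-- A flat equation: both sides well-formed, of the same height which is at most 1,
and with the same variables. -/
def IsFlatEq {F : Type} (ar : F → ℕ) (e : Pat F × Pat F) : Prop :=
  e.1.WF ar ∧ e.2.WF ar ∧ e.1.height = e.2.height ∧ e.1.height ≤ 1 ∧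
  (∀ v : ℕ, Pat.HasVar v e.1 ↔ Pat.HasVar v e.2)

/-- One rewrite step using an equation of `E` (in either direction) at some position. -/
def Rew {F : Type} (E : List (Pat F × Pat F)) (s t : RTerm F) : Prop :=
  ∃ l r : Pat F, ((l, r) ∈ E ∨ (r, l) ∈ E) ∧
    ∃ (σ : ℕ → RTerm F) (p : List ℕ),
      RTerm.SubAt s p (l.subst σ) ∧ RTerm.ReplAt s p (r.subst σ) t

/-- Equivalence modulo the set of equations `E`. -/
def EqE {F : Type} (E : List (Pat F × Pat F)) : RTerm F → RTerm F → Prop :=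
  Relation.ReflTransGen (Rew E)

/-! ### Global constraints -/

/-- Transition rule of a tree automaton with constraints between brothers:
`sym(args) → res` with brother equalities `bcEq` and disequalities `bcNeq`
(1-based indices of children). -/
structure Rule (F Q : Type) where
  sym : F
  args : List Q
  bcEq : List (ℕ × ℕ)
  bcNeq : List (ℕ × ℕ)
  res : Q

/-- Atomic global constraints: `q ≈ q'`, `q ≉ q'`, and linear inequalities
`Σ c·|q| ≥ a` (type `|.|`) and `Σ c·‖q‖ ≥ a` (type `‖.‖`). -/
inductive GAtom (Q : Type) : Type
  | eq : Q → Q → GAtom Q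
  | neq : Q → Q → GAtom Q
  | cnt : List (ℤ × Q) → ℤ → GAtom Q
  | cls : List (ℤ × Q) → ℤ → GAtom Q

/-- Boolean combinations of atomic global constraints. -/
inductive GC (Q : Type) : Type
  | tt : GC Q
  | ff : GC Q
  | atom : GAtom Q → GC Q
  | and : GC Q → GC Q → GC Q
  | or : GC Q → GC Q → GC Q
  | not : GC Q → GC Q

/-- The set of `=E`-equivalence classes of members of a set of terms. -/
def classesOf {F : Type} (E : List (Pat F × Pat F)) (S : Set (RTerm F)) :
    Set (Set (RTerm F)) :=
  {C | ∃ t ∈ S, C = {u | EqE E t u}}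

section Sat

variable {β F Q : Type}

/-- Positions of a (run) tree where the node has state `q`
(`st` extracts the state of a node label). -/
def stPos (st : β → Q) (r : RTerm β) (q : Q) : Set (List ℕ) :=
  {p | ∃ s, RTerm.SubAt r p s ∧ st s.rootLabel = q}

/-- `⟦|q|⟧` : the number of positions with state `q`. -/
noncomputable def stCount (st : β → Q) (r : RTerm β) (q : Q) : ℕ :=
  (stPos st r q).ncard

/-- Terms occurring below positions with state `q`. -/
def stTerms (st : β → Q) (sy : β → F) (r : RTerm β) (q : Q) : Set (RTerm F) :=
  {t | ∃ p s, RTerm.SubAt r p s ∧ st s.rootLabel = q ∧ s.map sy = t}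

/-- `⟦‖q‖⟧` : the number of `=E`-classes of terms at positions with state `q`. -/
noncomputable def clsCount (E : List (Pat F × Pat F)) (st : β → Q) (sy : β → F)
    (r : RTerm β) (q : Q) : ℕ :=
  (classesOf E (stTerms st sy r q)).ncard

/-- Satisfaction of a global atomic constraint by a run tree. -/
def satAtom (E : List (Pat F × Pat F)) (st : β → Q) (sy : β → F) (r : RTerm β) :
    GAtom Q → Prop
  | .eq q q' => ∀ p p' s s', p ≠ p' → RTerm.SubAt r p s → RTerm.SubAt r p' s' →
      st s.rootLabel = q → st s'.rootLabel = q' → EqE E (s.map sy) (s'.map sy)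
  | .neq q q' => ∀ p p' s s', p ≠ p' → RTerm.SubAt r p s → RTerm.SubAt r p' s' →
      st s.rootLabel = q → st s'.rootLabel = q' → ¬ EqE E (s.map sy) (s'.map sy)
  | .cnt l a => a ≤ (l.map (fun cq => cq.1 * (stCount st r cq.2 : ℤ))).sum
  | .cls l a => a ≤ (l.map (fun cq => cq.1 * (clsCount E st sy r cq.2 : ℤ))).sum

/-- Satisfaction of a global constraint by a run tree. -/
def satGC (E : List (Pat F × Pat F)) (st : β → Q) (sy : β → F) (r : RTerm β) :
    GC Q → Prop
  | .tt => True
  | .ff => False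
  | .atom a => satAtom E st sy r a
  | .and c d => satGC E st sy r c ∧ satGC E st sy r d
  | .or c d => satGC E st sy r c ∨ satGC E st sy r d
  | .not c => ¬ satGC E st sy r c

end Sat

/-! ### Tree automata with global and brother constraints modulo a flat theory -/

/-- A run is represented as a tree labeled by the rules applied at each position. -/
abbrev Run (F Q : Type) := RTerm (Rule F Q)

def Run.state {F Q : Type} (r : Run F Q) : Q := (RTerm.rootLabel r).res
def Run.term {F Q : Type} (r : Run F Q) : RTerm F := r.map Rule.sym

/-- `r` is a structurally correct run using rules of `Δ`, whose local brother
constraints are satisfied modulo `E`. -/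
inductive IsRun {F Q : Type} (Δ : List (Rule F Q)) (E : List (Pat F × Pat F)) :
    Run F Q → Prop
  | node {ρ : Rule F Q} {rs : List (Run F Q)} :
      ρ ∈ Δ →
      ρ.args = rs.map Run.state →
      (∀ r ∈ rs, IsRun Δ E r) →
      (∀ i j ri rj, (i, j) ∈ ρ.bcEq → rs[i - 1]? = some ri →
        rs[j - 1]? = some rj → EqE E ri.term rj.term) →
      (∀ i j ri rj, (i, j) ∈ ρ.bcNeq → rs[i - 1]? = some ri →
        rs[j - 1]? = some rj → ¬ EqE E ri.term rj.term) →
      IsRun Δ E (RTerm.node ρ rs)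

/-- Tree automaton with brother constraints and global constraints modulo a flat theory. -/
structure TABG (F Q : Type) where
  arity : F → ℕ
  stQ : Finset Q
  rules : List (Rule F Q)
  final : List Q
  eqs : List (Pat F × Pat F)
  gc : GC Q

def TABG.IsAccRun {F Q : Type} (A : TABG F Q) (r : Run F Q) : Prop :=
  IsRun A.rules A.eqs r ∧ satGC A.eqs Rule.res Rule.sym r A.gc ∧ r.state ∈ A.final

def TABG.Lang {F Q : Type} (A : TABG F Q) : Set (RTerm F) :=
  {t | ∃ r : Run F Q, A.IsAccRun r ∧ r.term = t}

def Rule.WFr {F Q : Type} (ar : F → ℕ) (S : Finset Q) (ρ : Rule F Q) : Prop :=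
  ρ.args.length = ar ρ.sym ∧ ρ.res ∈ S ∧ (∀ q ∈ ρ.args, q ∈ S) ∧
  (∀ ij ∈ ρ.bcEq, 1 ≤ ij.1 ∧ ij.1 ≤ ρ.args.length ∧ 1 ≤ ij.2 ∧ ij.2 ≤ ρ.args.length) ∧
  (∀ ij ∈ ρ.bcNeq, 1 ≤ ij.1 ∧ ij.1 ≤ ρ.args.length ∧ 1 ≤ ij.2 ∧ ij.2 ≤ ρ.args.length)

/-- Well-formedness of a TABG: the equational theory is flat, the rules respect
the arities and the state set, and final states belong to the state set. -/
def TABG.WF {F Q : Type} (A : TABG F Q) : Prop :=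
  (∀ e ∈ A.eqs, IsFlatEq A.arity e) ∧
  (∀ ρ ∈ A.rules, ρ.WFr A.arity A.stQ) ∧
  (∀ q ∈ A.final, q ∈ A.stQ)

/-! ### Classes of constraints -/

def GAtom.IsEqNeq {Q : Type} : GAtom Q → Prop
  | .eq _ _ => True
  | .neq _ _ => True
  | .cnt _ _ => False
  | .cls _ _ => False

/-- All coefficients and the constant have the same sign. -/
def sameSign (l : List ℤ) (a : ℤ) : Prop :=
  ((∀ c ∈ l, 0 ≤ c) ∧ 0 ≤ a) ∨ ((∀ c ∈ l, c ≤ 0) ∧ a ≤ 0)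

/-- eq/neq atoms and *natural* linear inequalities. -/
def GAtom.IsNat {Q : Type} : GAtom Q → Prop
  | .eq _ _ => True
  | .neq _ _ => True
  | .cnt l a => sameSign (l.map Prod.fst) a
  | .cls l a => sameSign (l.map Prod.fst) a

/-- eq/neq atoms and natural linear inequalities over the `|q|` only. -/
def GAtom.IsNatCnt {Q : Type} : GAtom Q → Prop
  | .eq _ _ => True
  | .neq _ _ => True
  | .cnt l a => sameSign (l.map Prod.fst) a
  | .cls _ _ => False

def GC.AtomsAre {Q : Type} (P : GAtom Q → Prop) : GC Q → Prop
  | .tt => True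
  | .ff => True
  | .atom a => P a
  | .and c d => GC.AtomsAre P c ∧ GC.AtomsAre P d
  | .or c d => GC.AtomsAre P c ∧ GC.AtomsAre P d
  | .not c => GC.AtomsAre P c

/-- Positive conjunctive constraint: a conjunction of atoms. -/
def GC.IsConjAtoms {Q : Type} : GC Q → Prop
  | .tt => True
  | .ff => False
  | .atom _ => True
  | .and c d => GC.IsConjAtoms c ∧ GC.IsConjAtoms d
  | .or _ _ => False
  | .not _ => False

/-- A literal: an atom (with natural arithmetic atoms) or the negation of an
eq/neq atom. -/
def GC.IsLit {Q : Type} : GC Q → Prop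
  | .atom a => GAtom.IsNat a
  | .not (.atom (.eq _ _)) => True
  | .not (.atom (.neq _ _)) => True
  | _ => False

def GC.IsConjLit {Q : Type} : GC Q → Prop
  | .and c d => GC.IsConjLit c ∧ GC.IsConjLit d
  | c => GC.IsLit c

def GC.IsDNF {Q : Type} : GC Q → Prop
  | .or c d => GC.IsDNF c ∧ GC.IsDNF d
  | c => GC.IsConjLit c

/-- Normalized constraint: `true`, `false`, or a disjunction of conjunctions of
literals in which all arithmetic literals are positive. -/
def GC.Normalized {Q : Type} (c : GC Q) : Prop :=
  c = GC.tt ∨ c = GC.ff ∨ GC.IsDNF c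

/-- No reflexive disequality constraints (the TAGED restriction). -/
def GC.NoReflNeq {Q : Type} : GC Q → Prop :=
  GC.AtomsAre (fun a => match a with
    | .neq q q' => q ≠ q'
    | _ => True)

def conjList {Q : Type} : List (GC Q) → GC Q
  | [] => GC.tt
  | [c] => c
  | c :: cs => GC.and c (conjList cs)

def disjList {Q : Type} : List (GC Q) → GC Q
  | [] => GC.ff
  | [c] => c
  | c :: cs => GC.or c (disjList cs)

/-- No local constraints between brothers. -/
def TABG.NoBrother {F Q : Type} (A : TABG F Q) : Prop :=
  ∀ ρ ∈ A.rules, ρ.bcEq = [] ∧ ρ.bcNeq = []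

/-- A TAG: empty equational theory and no brother constraints. -/
def TABG.IsTAG {F Q : Type} (A : TABG F Q) : Prop := A.eqs = [] ∧ A.NoBrother

/-- A plain tree automaton: a TAG with trivial global constraint. -/
def TABG.IsTA {F Q : Type} (A : TABG F Q) : Prop := A.IsTAG ∧ A.gc = GC.tt

/-! ### Synonym states -/

section Syn

variable {F Q : Type} [DecidableEq Q]

/-- Possible replacements of a state occurrence: `q̄` may stay or become `q̂`. -/
def replS (qb qh q : Q) : List Q := if q = qb then [qb, qh] else [q]

/-- Replacement of every occurrence of `|q̄|` (resp. `‖q̄‖`) by `|q̄| + |q̂|`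
(resp. `‖q̄‖ + ‖q̂‖`) in a linear expression. -/
def linRepl (qb qh : Q) (l : List (ℤ × Q)) : List (ℤ × Q) :=
  l.flatMap (fun cq => (replS qb qh cq.2).map (fun q' => (cq.1, q')))

/-- Literal transformation on positive atoms. -/
def synAtom (qb qh : Q) : GAtom Q → GC Q
  | .eq q1 q2 => conjList ((replS qb qh q1).flatMap (fun a =>
      (replS qb qh q2).map (fun b => GC.atom (GAtom.eq a b))))
  | .neq q1 q2 => conjList ((replS qb qh q1).flatMap (fun a =>
      (replS qb qh q2).map (fun b => GC.atom (GAtom.neq a b))))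
  | .cnt l a => GC.atom (GAtom.cnt (linRepl qb qh l) a)
  | .cls l a => GC.atom (GAtom.cls (linRepl qb qh l) a)

/-- The literal transformation `Ĉ` of (a normalized) constraint, for `q̄ ↝ q̂`. -/
def GC.synTrans (qb qh : Q) : GC Q → GC Q
  | .tt => .tt
  | .ff => .ff
  | .atom a => synAtom qb qh a
  | .not (.atom (.eq q1 q2)) => disjList ((replS qb qh q1).flatMap (fun a =>
      (replS qb qh q2).map (fun b => GC.not (GC.atom (GAtom.eq a b)))))
  | .not (.atom (.neq q1 q2)) => disjList ((replS qb qh q1).flatMap (fun a =>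
      (replS qb qh q2).map (fun b => GC.not (GC.atom (GAtom.neq a b)))))
  | .not c => GC.not (GC.synTrans qb qh c)
  | .and c d => GC.and (GC.synTrans qb qh c) (GC.synTrans qb qh d)
  | .or c d => GC.or (GC.synTrans qb qh c) (GC.synTrans qb qh d)

/-- All rules obtained from `ρ` by all possible replacements of occurrences of
`q̄` by `q̂`. -/
def Rule.synVars (qb qh : Q) (ρ : Rule F Q) : List (Rule F Q) :=
  (ρ.args.mapM (replS qb qh)).flatMap (fun args' =>
    (replS qb qh ρ.res).map (fun res' =>
      { sym := ρ.sym, args := args', bcEq := ρ.bcEq, bcNeq := ρ.bcNeq, res := res' }))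

/-- `F_{q̄↝q̂}` on the list of final states. -/
def finSyn (qb qh : Q) (l : List Q) : List Q := if qb ∈ l then qh :: l else l

/-- The constraint `‖q‖ = k`. -/
def clsEqC (q : Q) (k : ℤ) : GC Q :=
  GC.and (GC.atom (GAtom.cls [(1, q)] k)) (GC.atom (GAtom.cls [(-1, q)] (-k)))

/-- The automaton `A_{q̄↝q̂}`. -/
def TABG.synonym (A : TABG F Q) (qb qh : Q) : TABG F Q :=
  { arity := A.arity
    stQ := insert qh A.stQ
    rules := A.rules.flatMap (Rule.synVars qb qh)
    final := finSyn qb qh A.final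
    eqs := A.eqs
    gc := GC.and
      (GC.or (GC.and (clsEqC qb 0) (clsEqC qh 0))
             (GC.and (clsEqC qh 1) (GC.atom (GAtom.neq qb qh))))
      (GC.synTrans qb qh A.gc) }

end Syn

/-! ### Removal of the counting constraints `|q|` : the automaton `A_¬ℕ` -/

def GC.cntAtoms {Q : Type} : GC Q → List (List (ℤ × Q) × ℤ)
  | .atom (.cnt l a) => [(l, a)]
  | .and c d => GC.cntAtoms c ++ GC.cntAtoms d
  | .or c d => GC.cntAtoms c ++ GC.cntAtoms d
  | .not c => GC.cntAtoms c
  | _ => []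

def GC.eqAtoms {Q : Type} : GC Q → List (Q × Q)
  | .atom (.eq q q') => [(q, q')]
  | .and c d => GC.eqAtoms c ++ GC.eqAtoms d
  | .or c d => GC.eqAtoms c ++ GC.eqAtoms d
  | .not c => GC.eqAtoms c
  | _ => []

def GC.neqAtoms {Q : Type} : GC Q → List (Q × Q)
  | .atom (.neq q q') => [(q, q')]
  | .and c d => GC.neqAtoms c ++ GC.neqAtoms d
  | .or c d => GC.neqAtoms c ++ GC.neqAtoms d
  | .not c => GC.neqAtoms c
  | _ => []

/-- `max_A` : one plus the maximal constant occurring in the counting literals. -/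
def GC.maxConst {Q : Type} (c : GC Q) : ℕ :=
  1 + ((c.cntAtoms.map (fun la => la.2.natAbs)).foldr max 0)

/-- Truncated sum of two mappings `Q → {0,…,m}`. -/
def msumF {Q : Type} {m : ℕ} (M1 M2 : Q → Fin (m + 1)) : Q → Fin (m + 1) :=
  fun q => ⟨min ((M1 q : ℕ) + (M2 q : ℕ)) m, Nat.lt_succ_of_le (Nat.min_le_right _ _)⟩

/-- The mapping `M_q`. -/
def unitMap {Q : Type} [DecidableEq Q] (m : ℕ) (q : Q) : Q → Fin (m + 1) :=
  fun q' => if q' = q then ⟨min 1 m, Nat.lt_succ_of_le (Nat.min_le_right _ _)⟩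
            else ⟨0, Nat.succ_pos m⟩

/-- Value of a linear expression under a mapping. -/
def lvalF {Q : Type} {m : ℕ} (M : Q → Fin (m + 1)) (l : List (ℤ × Q)) : ℤ :=
  (l.map (fun cq => cq.1 * ((M cq.2 : ℕ) : ℤ))).sum

/-- All variants of a rule, decorated with occurrence-counting mappings. -/
noncomputable def Rule.notNVars {F Q : Type} [Fintype Q] [DecidableEq Q] (m : ℕ) (ρ : Rule F Q) :
    List (Rule F (Q × (Q → Fin (m + 1)))) :=
  ((ρ.args.mapM (fun q =>
      ((Finset.univ : Finset (Q → Fin (m + 1))).toList).map (fun M => (q, M))))).map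
    (fun args' =>
      { sym := ρ.sym, args := args', bcEq := ρ.bcEq, bcNeq := ρ.bcNeq,
        res := (ρ.res, (args'.map Prod.snd).foldr msumF (unitMap m ρ.res)) })

/-- The automaton `A_¬ℕ`. -/
noncomputable def TABG.notN {F Q : Type} [Fintype Q] [DecidableEq Q] (A : TABG F Q) :
    TABG F (Q × (Q → Fin (A.gc.maxConst + 1))) :=
  { arity := A.arity
    stQ := A.stQ ×ˢ (Finset.univ : Finset (Q → Fin (A.gc.maxConst + 1)))
    rules := A.rules.flatMap (Rule.notNVars A.gc.maxConst)
    final := (A.final.flatMap (fun q =>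
        ((Finset.univ : Finset (Q → Fin (A.gc.maxConst + 1))).toList).map
          (fun M => (q, M)))).filter
        (fun qM => decide (∀ la ∈ A.gc.cntAtoms, la.2 ≤ lvalF qM.2 la.1))
    eqs := A.eqs
    gc := GC.and
      (conjList ((A.gc.eqAtoms).flatMap (fun qq =>
        ((Finset.univ : Finset (Q → Fin (A.gc.maxConst + 1))).toList).flatMap (fun M1 =>
          ((Finset.univ : Finset (Q → Fin (A.gc.maxConst + 1))).toList).map (fun M2 =>
            GC.atom (GAtom.eq (qq.1, M1) (qq.2, M2)))))))
      (conjList ((A.gc.neqAtoms).flatMap (fun qq =>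
        ((Finset.univ : Finset (Q → Fin (A.gc.maxConst + 1))).toList).flatMap (fun M1 =>
          ((Finset.univ : Finset (Q → Fin (A.gc.maxConst + 1))).toList).map (fun M2 =>
            GC.atom (GAtom.neq (qq.1, M1) (qq.2, M2))))))) }

/-! ### Global pumpings -/

section Pump

variable {F Q : Type}

/-- `H_i` : positions of subruns of positive height equal to `i`. -/
def Hset (r : Run F Q) (i : ℕ) : Set (List ℕ) :=
  {p | ∃ s, RTerm.SubAt r p s ∧ 0 < RTerm.height s ∧ RTerm.height s = i}

/-- `Ȟ_i` : positions `p.j` of subruns of positive height `< i` whose parent has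
height `> i`. -/
def Hcheck (r : Run F Q) (i : ℕ) : Set (List ℕ) :=
  {p' | ∃ (p : List ℕ) (j : ℕ) (s s' : Run F Q), p' = p ++ [j] ∧
    RTerm.SubAt r p s ∧ RTerm.SubAt r p' s' ∧
    0 < RTerm.height s' ∧ RTerm.height s' < i ∧ i < RTerm.height s}

/-- `H̊_i` : positions `p.j` of subruns of height `0` (with `0 < i`) whose parent
has height `> i`. -/
def Hring (r : Run F Q) (i : ℕ) : Set (List ℕ) :=
  {p' | ∃ (p : List ℕ) (j : ℕ) (s s' : Run F Q), p' = p ++ [j] ∧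
    RTerm.SubAt r p s ∧ RTerm.SubAt r p' s' ∧
    RTerm.height s' = 0 ∧ 0 < i ∧ i < RTerm.height s}

def Dom (r : Run F Q) (i : ℕ) : Set (List ℕ) := Hset r i ∪ Hcheck r i ∪ Hring r i

/-- A pump-injection `I : (H_i ∪ Ȟ_i ∪ H̊_i) → (H_j ∪ Ȟ_j ∪ H̊_j)`. -/
structure PumpInj (E : List (Pat F × Pat F)) (r : Run F Q) (i j : ℕ)
    (I : List ℕ → List ℕ) : Prop where
  inj : Set.InjOn I (Dom r i)
  mapsH : Set.MapsTo I (Hset r i) (Hset r j)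
  mapsHc : Set.MapsTo I (Hcheck r i) (Hcheck r j)
  mapsHr : Set.MapsTo I (Hring r i) (Hring r j)
  idRing : ∀ p ∈ Hring r i, I p = p
  stPres : ∀ p ∈ Dom r i, ∀ s s', RTerm.SubAt r p s → RTerm.SubAt r (I p) s' →
    Run.state s = Run.state s'
  eqPres : ∀ p1 p2, p1 ∈ Dom r i → p2 ∈ Dom r i →
    ∀ s1 s2 s1' s2', RTerm.SubAt r p1 s1 → RTerm.SubAt r p2 s2 →
      RTerm.SubAt r (I p1) s1' → RTerm.SubAt r (I p2) s2' →
      (EqE E (Run.term s1) (Run.term s2) ↔ EqE E (Run.term s1') (Run.term s2'))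

/-- Simultaneous replacement at all positions of `D` (which are assumed to be
pairwise parallel): at a position of `D` the subtree is replaced by a tree
allowed by `ρ`, elsewhere the tree is kept. -/
inductive MultiRepl {β : Type} (D : Set (List ℕ)) (ρ : List ℕ → RTerm β → Prop) :
    List ℕ → RTerm β → RTerm β → Prop
  | here {p : List ℕ} {t t' : RTerm β} : p ∈ D → ρ p t' → MultiRepl D ρ p t t'
  | node {p : List ℕ} {f : β} {ts ts' : List (RTerm β)} :
      p ∉ D → ts.length = ts'.length →
      (∀ k u u', ts[k]? = some u → ts'[k]? = some u' →
        MultiRepl D ρ (p ++ [k]) u u') →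
      MultiRepl D ρ p (RTerm.node f ts) (RTerm.node f ts')

/-- `r'` is the global pumping on `r` with indexes `i,j` and injection `I`. -/
def IsGlobalPumpingWith (E : List (Pat F × Pat F)) (r : Run F Q) (i j : ℕ)
    (I : List ℕ → List ℕ) (r' : Run F Q) : Prop :=
  PumpInj E r i j I ∧
  MultiRepl (Dom r i) (fun p s => RTerm.SubAt r (I p) s) [] r r'

/-- The `=E`-classes of the subterms at positions of `P`. -/
def classesAt (E : List (Pat F × Pat F)) (r : Run F Q) (P : Set (List ℕ)) :
    Set (Set (RTerm F)) :=
  classesOf E {t | ∃ p ∈ P, ∃ s, RTerm.SubAt r p s ∧ Run.term s = t}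

/-- The tuple `r_{t,P}` of a class `C`, as a function on states. -/
noncomputable def tupleAt (r : Run F Q) (P : Set (List ℕ)) (C : Set (RTerm F))
    (q : Q) : ℕ :=
  {p | p ∈ P ∧ ∃ s, RTerm.SubAt r p s ∧ Run.state s = q ∧ Run.term s ∈ C}.ncard

/-- The multiset ordering `r_P ≤ r_{P'}` : an injection on classes which is
dominating on the associated tuples. -/
def MsetLE (E : List (Pat F × Pat F)) (r : Run F Q) (P P' : Set (List ℕ)) : Prop :=
  ∃ φ : Set (RTerm F) → Set (RTerm F),
    Set.InjOn φ (classesAt E r P) ∧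
    Set.MapsTo φ (classesAt E r P) (classesAt E r P') ∧
    ∀ C ∈ classesAt E r P, ∀ q, tupleAt r P C q ≤ tupleAt r P' (φ C) q

end Pump

/-! ### Multisets of tuples of naturals (for the well quasi-ordering) -/

def TupLE {n : ℕ} (x y : Fin n → ℕ) : Prop := ∀ k, x k ≤ y k

/-- Multiset ordering: an injection mapping each element to a dominating one. -/
def MLE {n : ℕ} (S T : Multiset (Fin n → ℕ)) : Prop :=
  ∃ T' : Multiset (Fin n → ℕ), T' ≤ T ∧ Multiset.Rel TupLE S T'

def msumT {n : ℕ} (S : Multiset (Fin n → ℕ)) : ℕ :=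
  (S.map (fun x => ∑ k, x k)).sum

/-! ### Hedge automata with global constraints, and currying -/

/-- A finite word automaton over the alphabet `Q` (auxiliary states are naturals). -/
structure WordAut (Q : Type) where
  stS : Finset ℕ
  init : ℕ
  final : List ℕ
  trans : List (ℕ × Q × ℕ)

inductive WAccepts {Q : Type} (W : WordAut Q) : ℕ → List Q → Prop
  | nil {s : ℕ} : s ∈ W.final → WAccepts W s []
  | cons {s : ℕ} {q : Q} {s' : ℕ} {w : List Q} :
      (s, q, s') ∈ W.trans → WAccepts W s' w → WAccepts W s (q :: w)

def WordAut.Lang {Q : Type} (W : WordAut Q) (w : List Q) : Prop := WAccepts W W.init w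

/-- Transition rule `a(L) → q` of a hedge automaton. -/
structure HRule (F Q : Type) where
  sym : F
  wa : WordAut Q
  res : Q

/-- Hedge automaton with global constraints, over unranked ordered terms. -/
structure HAG (F Q : Type) where
  stQ : Finset Q
  rules : List (HRule F Q)
  final : List Q
  gc : GC Q

abbrev HRun (F Q : Type) := RTerm (HRule F Q)

def HRun.state {F Q : Type} (r : HRun F Q) : Q := (RTerm.rootLabel r).res
def HRun.term {F Q : Type} (r : HRun F Q) : RTerm F := r.map HRule.sym

inductive IsHRun {F Q : Type} (Δ : List (HRule F Q)) : HRun F Q → Prop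
  | node {ρ : HRule F Q} {rs : List (HRun F Q)} :
      ρ ∈ Δ → ρ.wa.Lang (rs.map HRun.state) →
      (∀ r ∈ rs, IsHRun Δ r) → IsHRun Δ (RTerm.node ρ rs)

def HAG.Lang {F Q : Type} (A : HAG F Q) : Set (RTerm F) :=
  {t | ∃ r : HRun F Q, IsHRun A.rules r ∧
        satGC ([] : List (Pat F × Pat F)) HRule.res HRule.sym r A.gc ∧
        HRun.state r ∈ A.final ∧ HRun.term r = t}

/-- The ranked signature `Σ_@` : symbols of `Σ` become constants, `none` is the
binary symbol `@`. -/
def arAt {F : Type} : Option F → ℕ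
  | none => 2
  | some _ => 0

/-- The `curry` encoding of unranked terms into ranked terms over `Σ_@`. -/
inductive Curried {F : Type} : RTerm F → RTerm (Option F) → Prop
  | base {a : F} : Curried (RTerm.node a []) (RTerm.node (some a) [])
  | step {a : F} {ts : List (RTerm F)} {t : RTerm F} {u v : RTerm (Option F)} :
      Curried (RTerm.node a ts) u → Curried t v →
      Curried (RTerm.node a (ts ++ [t])) (RTerm.node none [u, v])

/-! ### Concrete signatures and languages -/

/-- The signature `{a:0, s:1, f:2}` (resp. `{a:0, g:1, f:2}`): symbol `0` has
arity 0, symbol `1` arity 1, symbol `2` arity 2. -/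
def ar3 : Fin 3 → ℕ := ![0, 1, 2]

/-- `iter1 n` is `s^n(a)` (resp. `g^n(a)`). -/
def iter1 : ℕ → RTerm (Fin 3)
  | 0 => RTerm.node 0 []
  | n + 1 => RTerm.node 1 [iter1 n]

/-- `chain [n1,…,nk] = f(s^{n1}(a), f(s^{n2}(a), …, f(s^{nk}(a), a)…))`. -/
def chain : List ℕ → RTerm (Fin 3)
  | [] => RTerm.node 0 []
  | n :: ns => RTerm.node 2 [iter1 n, chain ns]

/-- The language of chains with pairwise distinct exponents. -/
def LKey : Set (RTerm (Fin 3)) := {t | ∃ ns : List ℕ, ns.Nodup ∧ t = chain ns}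

/-- `bracket [n1,…,nk] = f(g^{n1}(a), f(…, f(g^{n_{k−1}}(a), g^{n_k}(a))…))`. -/
def bracket : List ℕ → RTerm (Fin 3)
  | [] => RTerm.node 0 []
  | [n] => iter1 n
  | n :: ns => RTerm.node 2 [iter1 n, bracket ns]

/-- Every entry has exactly one partner with the same value. -/
def ExactlyOnePartner (ns : List ℕ) : Prop :=
  ∀ i, i < ns.length → ∃! j, j < ns.length ∧ j ≠ i ∧ ns[i]? = ns[j]?

def LDup : Set (RTerm (Fin 3)) :=
  {t | ∃ ns : List ℕ, ns ≠ [] ∧ ExactlyOnePartner ns ∧ t = bracket ns}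

/-! ### Concrete, codable presentations of automata -/

abbrev RuleData := ℕ × List ℕ × List (ℕ × ℕ) × List (ℕ × ℕ) × ℕ
abbrev PatAtomData := ℕ ⊕ ℕ
abbrev FlatSideData := PatAtomData ⊕ (ℕ × List PatAtomData)
abbrev LinData := List (ℤ × ℕ) × ℤ
abbrev GAtomData := (ℕ × ℕ) ⊕ ((ℕ × ℕ) ⊕ (LinData ⊕ LinData))
abbrev GCNodeData := GAtomData ⊕ (ℕ × ℕ × ℕ)
abbrev TABGData :=
  List (ℕ × ℕ) × List RuleData × List ℕ × List (FlatSideData × FlatSideData) ×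
    List GCNodeData

def decodePatAtom : PatAtomData → Pat ℕ
  | Sum.inl v => Pat.var v
  | Sum.inr c => Pat.node c []

def decodeSide : FlatSideData → Pat ℕ
  | Sum.inl a => decodePatAtom a
  | Sum.inr (f, l) => Pat.node f (l.map decodePatAtom)

def decodeGAtom : GAtomData → GAtom ℕ
  | Sum.inl (q, q') => GAtom.eq q q'
  | Sum.inr (Sum.inl (q, q')) => GAtom.neq q q'
  | Sum.inr (Sum.inr (Sum.inl (l, a))) => GAtom.cnt l a
  | Sum.inr (Sum.inr (Sum.inr (l, a))) => GAtom.cls l a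

def decodeGC (nodes : List GCNodeData) : ℕ → ℕ → GC ℕ
  | 0, _ => GC.tt
  | fuel + 1, i =>
    match nodes[i]? with
    | some (Sum.inl a) => GC.atom (decodeGAtom a)
    | some (Sum.inr (op, l, rr)) =>
      if op = 0 then GC.tt
      else if op = 1 then GC.ff
      else if op = 2 then GC.and (decodeGC nodes fuel l) (decodeGC nodes fuel rr)
      else if op = 3 then GC.or (decodeGC nodes fuel l) (decodeGC nodes fuel rr)
      else GC.not (decodeGC nodes fuel l)
    | none => GC.tt

def decodeRule : RuleData → Rule ℕ ℕ
  | (f, args, be, bn, q) => ⟨f, args, be, bn, q⟩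

def decodeArity (sig : List (ℕ × ℕ)) : ℕ → ℕ :=
  fun f => (((sig.find? (fun p => p.1 == f)).map Prod.snd).getD 0)

def dataStates (rules : List RuleData) (final : List ℕ) : Finset ℕ :=
  (rules.flatMap (fun r => r.2.2.2.2 :: r.2.1)).toFinset ∪ final.toFinset

/-- Decoding of a full TABG with arbitrary Boolean global constraint. -/
def decodeTABG (d : TABGData) : TABG ℕ ℕ :=
  { arity := decodeArity d.1
    stQ := dataStates d.2.1 d.2.2.1
    rules := d.2.1.map decodeRule
    final := d.2.2.1
    eqs := d.2.2.2.1.map (fun e => (decodeSide e.1, decodeSide e.2))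
    gc := decodeGC d.2.2.2.2 (d.2.2.2.2).length 0 }

/-- Data for a `TAG^∧[≈]` : signature, rules (no brother constraints), final
states, and a conjunction of equational atoms `q ≈ q'`. -/
abbrev TAGCEData := List (ℕ × ℕ) × List (ℕ × List ℕ × ℕ) × List ℕ × List (ℕ × ℕ)

def decodeTAGCE (d : TAGCEData) : TABG ℕ ℕ :=
  { arity := decodeArity d.1
    stQ := (d.2.1.flatMap (fun r => r.2.2 :: r.2.1)).toFinset ∪ d.2.2.1.toFinset
    rules := d.2.1.map (fun r => ⟨r.1, r.2.1, [], [], r.2.2⟩)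
    final := d.2.2.1
    eqs := []
    gc := conjList (d.2.2.2.map (fun qq => GC.atom (GAtom.eq qq.1 qq.2))) }

/-- Data for a `TAG^∧[≈, |.|_ℤ]` : as above plus a conjunction of integer linear
inequalities. -/
abbrev TAGCZData :=
  List (ℕ × ℕ) × List (ℕ × List ℕ × ℕ) × List ℕ × List (ℕ × ℕ) × List LinData

def decodeTAGCZ (d : TAGCZData) : TABG ℕ ℕ :=
  { arity := decodeArity d.1
    stQ := (d.2.1.flatMap (fun r => r.2.2 :: r.2.1)).toFinset ∪ d.2.2.1.toFinset
    rules := d.2.1.map (fun r => ⟨r.1, r.2.1, [], [], r.2.2⟩)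
    final := d.2.2.1
    eqs := []
    gc := conjList
      (d.2.2.2.1.map (fun qq => GC.atom (GAtom.eq qq.1 qq.2)) ++
       d.2.2.2.2.map (fun la => GC.atom (GAtom.cnt la.1 la.2))) }

/-- A tree language over the ranked signature `ar` is regular if it is the
language of a plain tree automaton. -/
def IsRegular (ar : ℕ → ℕ) (L : Set (RTerm ℕ)) : Prop :=
  ∃ (n : ℕ) (B : TABG ℕ (Fin n)), B.arity = ar ∧ B.WF ∧ B.IsTA ∧ B.Lang = L

/-! ### Automata classes as predicates -/

/-- A TAGED: a TAG whose constraint is a conjunction of atoms `q ≈ q'`, `q ≉ q'`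
without reflexive disequalities. -/
def TAGEDCond {F Q : Type} (A : TABG F Q) : Prop :=
  A.IsTAG ∧ A.gc.IsConjAtoms ∧ A.gc.AtomsAre GAtom.IsEqNeq ∧ A.gc.NoReflNeq

/-- A positive conjunctive TAG with eq/neq atoms (`TAG^∧[≈,≉]`). -/
def TAGCwCond {F Q : Type} (A : TABG F Q) : Prop :=
  A.IsTAG ∧ A.gc.IsConjAtoms ∧ A.gc.AtomsAre GAtom.IsEqNeq

end TreeAut

namespace TreeAut

/-! The union automaton runs `A1` and `A2` on disjoint copies of their states, with the
conjunction of both renamed global constraints. A run of it only ever uses states of one copy,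
since every rule stays inside its copy; and on such a run the constraint of the other copy holds
vacuously, because an atom `q ≈ q'` or `q ≉ q'` only speaks about positions labelled `q`. This is
where positivity and conjunctivity are needed: a negated or disjunctive atom could fail there. -/

namespace RTerm

variable {F G H : Type}

theorem map_node (g : F → G) (a : F) (ts : List (RTerm F)) :
    map g (node a ts) = node (g a) (ts.map (map g)) := by
  rw [map, List.attach_map_val (f := map g)]

theorem map_map (g : G → H) (f : F → G) : ∀ t : RTerm F, map g (map f t) = map (g ∘ f) t
  | .node a ts => by
    rw [map_node, map_node, map_node, List.map_map]
    exact congrArg _ (List.map_congr_left fun u hu => map_map g f u)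
decreasing_by
  have := List.sizeOf_lt_of_mem hu
  simp only [node.sizeOf_spec]
  omega

@[simp]
theorem rootLabel_map (g : F → G) (t : RTerm F) : (map g t).rootLabel = g t.rootLabel := by
  cases t
  rw [map_node]
  rfl

theorem subAt_map_iff (g : F → G) {p : List ℕ} {t : RTerm F} {s : RTerm G} :
    SubAt (map g t) p s ↔ ∃ s₀, SubAt t p s₀ ∧ map g s₀ = s := by
  induction p generalizing t with
  | nil =>
    constructor
    · intro h
      generalize hx : map g t = x at h
      cases h
      exact ⟨t, .refl t, hx⟩
    · rintro ⟨s₀, h, rfl⟩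
      cases h
      exact .refl _
  | cons i p ih =>
    obtain ⟨a, ts⟩ := t
    rw [map_node]
    constructor
    · intro h
      cases h with
      | step hget hsub =>
        rw [List.getElem?_map] at hget
        obtain ⟨u, hu, rfl⟩ := Option.map_eq_some_iff.1 hget
        obtain ⟨s₀, hs₀, rfl⟩ := ih.1 hsub
        exact ⟨s₀, .step hu hs₀, rfl⟩
    · rintro ⟨s₀, h, rfl⟩
      cases h with
      | step hget hsub =>
        exact .step (by rw [List.getElem?_map, hget]; rfl) (ih.2 ⟨s₀, hsub, rfl⟩)

end RTerm

section Rename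

variable {F Q Q' : Type}

@[simps]
def Rule.map (e : Q → Q') (ρ : Rule F Q) : Rule F Q' :=
  ⟨ρ.sym, ρ.args.map e, ρ.bcEq, ρ.bcNeq, e ρ.res⟩

def GAtom.map (e : Q → Q') : GAtom Q → GAtom Q'
  | .eq q q' => .eq (e q) (e q')
  | .neq q q' => .neq (e q) (e q')
  | .cnt l a => .cnt (l.map fun cq => (cq.1, e cq.2)) a
  | .cls l a => .cls (l.map fun cq => (cq.1, e cq.2)) a

def GC.map (e : Q → Q') : GC Q → GC Q'
  | .tt => .tt
  | .ff => .ff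
  | .atom a => .atom (a.map e)
  | .and c d => .and (c.map e) (d.map e)
  | .or c d => .or (c.map e) (d.map e)
  | .not c => .not (c.map e)

variable {e : Q → Q'}

theorem Rule.map_injective (he : Function.Injective e) :
    Function.Injective (Rule.map (F := F) e) := by
  rintro ⟨⟩ ⟨⟩ h
  simp only [Rule.map, Rule.mk.injEq, (List.map_injective_iff.2 he).eq_iff, he.eq_iff] at h
  simp only [h]

theorem GAtom.IsEqNeq.map {a : GAtom Q} (h : a.IsEqNeq) : (a.map e).IsEqNeq := by
  cases a <;> exact h

theorem GC.IsConjAtoms.map {c : GC Q} (h : c.IsConjAtoms) : (c.map e).IsConjAtoms := by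
  induction c with
  | and c d ihc ihd => exact ⟨ihc h.1, ihd h.2⟩
  | _ => exact h

theorem GC.AtomsAre.map {P : GAtom Q → Prop} {P' : GAtom Q' → Prop}
    (hP : ∀ a, P a → P' (a.map e)) {c : GC Q} (h : c.AtomsAre P) : (c.map e).AtomsAre P' := by
  induction c with
  | tt | ff => trivial
  | atom a => exact hP a h
  | and c d ihc ihd | or c d ihc ihd => exact ⟨ihc h.1, ihd h.2⟩
  | not c ihc => exact ihc h

@[simp]
theorem Run.term_map (r : Run F Q) : Run.term (r.map (Rule.map e)) = r.term :=
  RTerm.map_map _ _ r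

@[simp]
theorem Run.state_map (r : Run F Q) : Run.state (r.map (Rule.map e)) = e r.state := by
  simp [Run.state]

end Rename

section Runs

variable {F Q Q' : Type} {Δ : List (Rule F Q)} {Δ' : List (Rule F Q')}
  {E : List (Pat F × Pat F)} {e : Q → Q'}

def SatPairs (P : RTerm F → RTerm F → Prop) (l : List (ℕ × ℕ)) (ts : List (RTerm F)) : Prop :=
  ∀ i j, (i, j) ∈ l → ∀ ti tj, ts[i - 1]? = some ti → ts[j - 1]? = some tj → P ti tj

theorem isRun_node_iff {ρ : Rule F Q} {rs : List (Run F Q)} :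
    IsRun Δ E (.node ρ rs) ↔
      ρ ∈ Δ ∧ ρ.args = rs.map Run.state ∧ (∀ r ∈ rs, IsRun Δ E r) ∧
        SatPairs (EqE E) ρ.bcEq (rs.map Run.term) ∧
        SatPairs (fun s t => ¬ EqE E s t) ρ.bcNeq (rs.map Run.term) := by
  have hpairs : ∀ (P : RTerm F → RTerm F → Prop) (l : List (ℕ × ℕ)),
      (∀ i j ri rj, (i, j) ∈ l → rs[i - 1]? = some ri → rs[j - 1]? = some rj →
        P (Run.term ri) (Run.term rj)) ↔ SatPairs P l (rs.map Run.term) := by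
    intro P l
    simp only [SatPairs, List.getElem?_map, Option.map_eq_some_iff]
    constructor
    · rintro h i j hij _ _ ⟨ri, hri, rfl⟩ ⟨rj, hrj, rfl⟩
      exact h i j ri rj hij hri hrj
    · intro h i j ri rj hij hri hrj
      exact h i j hij _ _ ⟨ri, hri, rfl⟩ ⟨rj, hrj, rfl⟩
  rw [← hpairs, ← hpairs]
  constructor
  · rintro ⟨hρ, hargs, hrs, hbe, hbn⟩
    exact ⟨hρ, hargs, hrs, hbe, hbn⟩
  · rintro ⟨hρ, hargs, hrs, hbe, hbn⟩
    exact .node hρ hargs hrs hbe hbn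

theorem isRun_map_iff (he : Function.Injective e) (hΔ : ∀ ρ, ρ.map e ∈ Δ' ↔ ρ ∈ Δ) :
    ∀ r : Run F Q, IsRun Δ' E (r.map (Rule.map e)) ↔ IsRun Δ E r
  | .node ρ rs => by
    have ih : ∀ r ∈ rs, IsRun Δ' E (r.map (Rule.map e)) ↔ IsRun Δ E r :=
      fun r _ => isRun_map_iff he hΔ r
    have hstates :
        (rs.map (RTerm.map (Rule.map e))).map Run.state = (rs.map Run.state).map e := by
      simp only [List.map_map, Function.comp_def, Run.state_map]
    have hterms : (rs.map (RTerm.map (Rule.map e))).map Run.term = rs.map Run.term := by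
      simp only [List.map_map, Function.comp_def, Run.term_map]
    rw [RTerm.map_node, isRun_node_iff, isRun_node_iff, Rule.map_args, hstates,
      (List.map_injective_iff.2 he).eq_iff, hterms, hΔ, List.forall_mem_map,
      forall₂_congr ih]
    rfl
decreasing_by
  have := List.sizeOf_lt_of_mem ‹_›
  simp only [RTerm.node.sizeOf_spec]
  omega

theorem IsRun.mem_range_map {r : Run F Q'} (h : IsRun Δ' E r)
    (hΔ : ∀ ρ ∈ Δ', ρ.res ∈ Set.range e → ρ ∈ Set.range (Rule.map e))
    (hr : r.state ∈ Set.range e) : r ∈ Set.range (RTerm.map (Rule.map e)) := by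
  induction h with
  | @node ρ rs hρ hargs _ _ _ ih =>
    obtain ⟨ρ, rfl⟩ := hΔ _ hρ hr
    have hstates : ∀ r ∈ rs, r.state ∈ Set.range e := by
      intro r hr
      have : r.state ∈ ρ.args.map e := (hargs ▸ List.mem_map_of_mem hr :)
      obtain ⟨q, -, hq⟩ := List.mem_map.1 this
      exact ⟨q, hq⟩
    obtain ⟨rs, rfl⟩ : rs ∈ Set.range (List.map (RTerm.map (Rule.map e))) := by
      rw [Set.range_list_map]
      exact fun r hr => ih r hr (hstates r hr)
    exact ⟨.node ρ rs, RTerm.map_node _ _ _⟩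

end Runs

section Constraints

variable {F Q Q' : Type} {E : List (Pat F × Pat F)} {e : Q → Q'}

theorem Rule.sym_comp_map (e : Q → Q') : Rule.sym ∘ Rule.map (F := F) e = Rule.sym := rfl

theorem stPos_map (he : Function.Injective e) (r : Run F Q) (q : Q) :
    stPos Rule.res (r.map (Rule.map e)) (e q) = stPos Rule.res r q := by
  ext p
  simp [stPos, RTerm.subAt_map_iff, he.eq_iff]

theorem stTerms_map (he : Function.Injective e) (r : Run F Q) (q : Q) :
    stTerms Rule.res Rule.sym (r.map (Rule.map e)) (e q) = stTerms Rule.res Rule.sym r q := by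
  ext t
  simp [stTerms, RTerm.subAt_map_iff, he.eq_iff, RTerm.map_map, Rule.sym_comp_map]

theorem satAtom_map_iff (he : Function.Injective e) (r : Run F Q) (a : GAtom Q) :
    satAtom E Rule.res Rule.sym (r.map (Rule.map e)) (a.map e) ↔
      satAtom E Rule.res Rule.sym r a := by
  cases a with
  | eq q q' | neq q q' =>
    simp only [GAtom.map, satAtom, RTerm.subAt_map_iff]
    constructor
    · intro h p p' s s' hne hs hs' hq hq'
      simpa [RTerm.map_map, Rule.sym_comp_map] using
        h p p' _ _ hne ⟨s, hs, rfl⟩ ⟨s', hs', rfl⟩ (by simp [hq]) (by simp [hq'])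
    · rintro h p p' _ _ hne ⟨s, hs, rfl⟩ ⟨s', hs', rfl⟩ hq hq'
      simpa [RTerm.map_map, Rule.sym_comp_map] using
        h p p' s s' hne hs hs' (he (by simpa using hq)) (he (by simpa using hq'))
  | cnt | cls =>
    simp [GAtom.map, satAtom, stCount, clsCount, Function.comp_def, stPos_map he, stTerms_map he]

theorem satGC_map_iff (he : Function.Injective e) (r : Run F Q) (c : GC Q) :
    satGC E Rule.res Rule.sym (r.map (Rule.map e)) (c.map e) ↔ satGC E Rule.res Rule.sym r c := by
  induction c with
  | tt | ff => rfl
  | atom a => exact satAtom_map_iff he r a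
  | and c d ihc ihd => exact and_congr ihc ihd
  | or c d ihc ihd => exact or_congr ihc ihd
  | not c ihc => exact not_congr ihc

theorem satGC_map_of_forall_res_notMem_range {r : Run F Q'} {c : GC Q} (hc : c.IsConjAtoms)
    (ha : c.AtomsAre GAtom.IsEqNeq)
    (hr : ∀ p s, RTerm.SubAt r p s → s.rootLabel.res ∉ Set.range e) :
    satGC E Rule.res Rule.sym r (c.map e) := by
  induction c with
  | tt => trivial
  | and c d ihc ihd => exact ⟨ihc hc.1 ha.1, ihd hc.2 ha.2⟩
  | atom a =>
    cases a with
    | eq q _ | neq q _ => exact fun p _ s _ _ hs _ hq _ => (hr p s hs ⟨q, hq.symm⟩).elim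
    | cnt | cls => exact ha.elim
  | ff | or | not => exact hc.elim

theorem res_mem_range_of_subAt_map {r : Run F Q} {p : List ℕ} {s : Run F Q'}
    (h : RTerm.SubAt (r.map (Rule.map e)) p s) : s.rootLabel.res ∈ Set.range e := by
  obtain ⟨s, -, rfl⟩ := (RTerm.subAt_map_iff _).1 h
  simp

end Constraints

section Union

variable {F Q Q' Q1 Q2 : Type}

theorem Rule.WFr.map {ar : F → ℕ} {S : Finset Q} {S' : Finset Q'} {e : Q → Q'}
    (he : ∀ q ∈ S, e q ∈ S') {ρ : Rule F Q} (h : ρ.WFr ar S) : (ρ.map e).WFr ar S' := by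
  obtain ⟨hlen, hres, hargs, hbe, hbn⟩ := h
  refine ⟨by simpa using hlen, he _ hres, ?_, by simpa using hbe, by simpa using hbn⟩
  simpa using fun q hq => he q (hargs q hq)

theorem TABG.isAccRun_map_iff {A : TABG F Q} {B : TABG F Q'} {e : Q → Q'}
    (he : Function.Injective e) (hrules : ∀ ρ, ρ.map e ∈ B.rules ↔ ρ ∈ A.rules)
    (heqs : B.eqs = A.eqs) (hfinal : ∀ q, e q ∈ B.final ↔ q ∈ A.final)
    (hgc : ∀ r : Run F Q, satGC B.eqs Rule.res Rule.sym (r.map (Rule.map e)) B.gc ↔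
      satGC A.eqs Rule.res Rule.sym r A.gc)
    (r : Run F Q) : B.IsAccRun (r.map (Rule.map e)) ↔ A.IsAccRun r := by
  rw [TABG.IsAccRun, TABG.IsAccRun, hgc, Run.state_map, hfinal, heqs, isRun_map_iff he hrules]

def TABG.union (A1 : TABG F Q1) (A2 : TABG F Q2) : TABG F (Q1 ⊕ Q2) where
  arity := A1.arity
  stQ := A1.stQ.disjSum A2.stQ
  rules := A1.rules.map (Rule.map Sum.inl) ++ A2.rules.map (Rule.map Sum.inr)
  final := A1.final.map Sum.inl ++ A2.final.map Sum.inr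
  eqs := A1.eqs
  gc := .and (A1.gc.map Sum.inl) (A2.gc.map Sum.inr)

variable {A1 : TABG F Q1} {A2 : TABG F Q2}

theorem TABG.WF.union (hwf1 : A1.WF) (hwf2 : A2.WF) (har : A2.arity = A1.arity) :
    (A1.union A2).WF := by
  refine ⟨hwf1.1, ?_, ?_⟩
  · simp only [TABG.union, List.mem_append, List.mem_map]
    rintro _ (⟨ρ, hρ, rfl⟩ | ⟨ρ, hρ, rfl⟩)
    · exact (hwf1.2.1 ρ hρ).map fun _ => Finset.inl_mem_disjSum.2
    · exact (har ▸ hwf2.2.1 ρ hρ).map fun _ => Finset.inr_mem_disjSum.2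
  · simp only [TABG.union, List.mem_append, List.mem_map]
    rintro _ (⟨q, hq, rfl⟩ | ⟨q, hq, rfl⟩)
    · exact Finset.inl_mem_disjSum.2 (hwf1.2.2 q hq)
    · exact Finset.inr_mem_disjSum.2 (hwf2.2.2 q hq)

theorem TABG.isAccRun_union_inl_iff (hc2 : A2.gc.IsConjAtoms)
    (ha2 : A2.gc.AtomsAre GAtom.IsEqNeq) (r : Run F Q1) :
    (A1.union A2).IsAccRun (r.map (Rule.map Sum.inl)) ↔ A1.IsAccRun r := by
  refine TABG.isAccRun_map_iff Sum.inl_injective (fun ρ => ?_) rfl (fun q => ?_) (fun r => ?_) r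
  · simp only [TABG.union, List.mem_append, List.mem_map,
      (Rule.map_injective Sum.inl_injective).eq_iff, exists_eq_right, or_iff_left_iff_imp]
    rintro ⟨ρ₂, -, h⟩
    exact (Sum.inr_ne_inl (congrArg Rule.res h)).elim
  · simp [TABG.union]
  · refine (and_iff_left ?_).trans (satGC_map_iff Sum.inl_injective r _)
    refine satGC_map_of_forall_res_notMem_range hc2 ha2 fun p s hs ⟨q₂, hq₂⟩ => ?_
    obtain ⟨q₁, hq₁⟩ := res_mem_range_of_subAt_map hs
    exact Sum.inr_ne_inl (hq₂.trans hq₁.symm)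

theorem TABG.isAccRun_union_inr_iff (hc1 : A1.gc.IsConjAtoms)
    (ha1 : A1.gc.AtomsAre GAtom.IsEqNeq) (heq : A2.eqs = A1.eqs) (r : Run F Q2) :
    (A1.union A2).IsAccRun (r.map (Rule.map Sum.inr)) ↔ A2.IsAccRun r := by
  refine TABG.isAccRun_map_iff Sum.inr_injective (fun ρ => ?_) heq.symm (fun q => ?_)
    (fun r => ?_) r
  · simp only [TABG.union, List.mem_append, List.mem_map,
      (Rule.map_injective Sum.inr_injective).eq_iff, exists_eq_right, or_iff_right_iff_imp]
    rintro ⟨ρ₁, -, h⟩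
    exact (Sum.inl_ne_inr (congrArg Rule.res h)).elim
  · simp [TABG.union]
  · rw [heq]
    refine (and_iff_right ?_).trans (satGC_map_iff Sum.inr_injective r _)
    refine satGC_map_of_forall_res_notMem_range hc1 ha1 fun p s hs ⟨q₁, hq₁⟩ => ?_
    obtain ⟨q₂, hq₂⟩ := res_mem_range_of_subAt_map hs
    exact Sum.inl_ne_inr (hq₁.trans hq₂.symm)

theorem TABG.mem_range_map_inl_or_inr_of_isRun_union {E : List (Pat F × Pat F)}
    {r : Run F (Q1 ⊕ Q2)} (h : IsRun (A1.union A2).rules E r) :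
    r ∈ Set.range (RTerm.map (Rule.map Sum.inl)) ∨
      r ∈ Set.range (RTerm.map (Rule.map Sum.inr)) := by
  rcases hq : r.state with q | q
  · refine .inl (h.mem_range_map ?_ ⟨q, hq.symm⟩)
    simp only [TABG.union, List.mem_append, List.mem_map]
    rintro _ (⟨ρ, -, rfl⟩ | ⟨ρ, -, rfl⟩) ⟨q', hq'⟩
    · exact ⟨ρ, rfl⟩
    · exact (Sum.inl_ne_inr hq').elim
  · refine .inr (h.mem_range_map ?_ ⟨q, hq.symm⟩)
    simp only [TABG.union, List.mem_append, List.mem_map]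
    rintro _ (⟨ρ, -, rfl⟩ | ⟨ρ, -, rfl⟩) ⟨q', hq'⟩
    · exact (Sum.inr_ne_inl hq').elim
    · exact ⟨ρ, rfl⟩

theorem TABG.lang_union (hc1 : A1.gc.IsConjAtoms) (ha1 : A1.gc.AtomsAre GAtom.IsEqNeq)
    (hc2 : A2.gc.IsConjAtoms) (ha2 : A2.gc.AtomsAre GAtom.IsEqNeq) (heq : A2.eqs = A1.eqs) :
    (A1.union A2).Lang = A1.Lang ∪ A2.Lang := by
  ext t
  constructor
  · rintro ⟨r, hr, rfl⟩
    rcases TABG.mem_range_map_inl_or_inr_of_isRun_union hr.1 with ⟨r, rfl⟩ | ⟨r, rfl⟩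
    · exact .inl ⟨r, (isAccRun_union_inl_iff hc2 ha2 r).1 hr, (Run.term_map r).symm⟩
    · exact .inr ⟨r, (isAccRun_union_inr_iff hc1 ha1 heq r).1 hr, (Run.term_map r).symm⟩
  · rintro (⟨r, hr, rfl⟩ | ⟨r, hr, rfl⟩)
    · exact ⟨_, (isAccRun_union_inl_iff hc2 ha2 r).2 hr, Run.term_map r⟩
    · exact ⟨_, (isAccRun_union_inr_iff hc1 ha1 heq r).2 hr, Run.term_map r⟩

end Union

/-- Positive conjunctive TABG (with eq/neq atoms) with the
same flat theory are effectively closed under union. -/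
theorem tabgcw_union {F Q1 Q2 : Type} (A1 : TABG F Q1) (A2 : TABG F Q2)
    (hwf1 : A1.WF) (hwf2 : A2.WF)
    (hc1 : A1.gc.IsConjAtoms) (ha1 : A1.gc.AtomsAre GAtom.IsEqNeq)
    (hc2 : A2.gc.IsConjAtoms) (ha2 : A2.gc.AtomsAre GAtom.IsEqNeq)
    (har : A2.arity = A1.arity) (heq : A2.eqs = A1.eqs) :
    ∃ A : TABG F (Q1 ⊕ Q2), A.WF ∧ A.arity = A1.arity ∧ A.eqs = A1.eqs ∧
      A.gc.IsConjAtoms ∧ A.gc.AtomsAre GAtom.IsEqNeq ∧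
      A.Lang = A1.Lang ∪ A2.Lang :=
  ⟨A1.union A2, hwf1.union hwf2 har, rfl, rfl, ⟨hc1.map, hc2.map⟩,
    ⟨ha1.map fun _ => GAtom.IsEqNeq.map, ha2.map fun _ => GAtom.IsEqNeq.map⟩,
    TABG.lang_union hc1 ha1 hc2 ha2 heq⟩

end TreeAut
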